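/- Let k ≥ 3 be a real number, s = √(k(k-2)), α = k - 1 + s, β = k - 1 - s. For every integer i ≥ 0, define the real numbers a_i = (α^(i+1) + α^i + β^(i+1) + β^i)/2 and A_i = (α^i + β^i)/2 + (k/(2s))·(α^i - β^i). Then a_i² = k(k-2)·A_i² + 2k. -/

import Mathlib

/-!
Since `α + 1 = k + s` and `β + 1 = k - s`, we have `a_i = ((k + s) α^i + (k - s) β^i) / 2` and
`s A_i = ((k + s) α^i - (k - s) β^i) / 2`. The difference of their squares is
`(k + s)(k - s)(αβ)^i = k² - s² = 2k`, because `αβ = 1` and `s² = k(k - 2)`.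
-/

theorem mul_eq_one_of_sq_eq {R : Type*} [CommRing R] {k s : R} (hs : s ^ 2 = k * (k - 2)) :
    (k - 1 + s) * (k - 1 - s) = 1 := by
  linear_combination -hs

section PellIdentity

variable {K : Type*} [Field K] [CharZero K]

theorem sq_add_eq_sq_sub_add {k s x y : K} (hs : s ^ 2 = k * (k - 2)) (hxy : x * y = 1) :
    (((k + s) * x + (k - s) * y) / 2) ^ 2 = (((k + s) * x - (k - s) * y) / 2) ^ 2 + 2 * k := by
  linear_combination (k ^ 2 - s ^ 2) * hxy - hs

theorem mul_half_add_div_mul_sub {k s : K} (x y : K) (hs : s ≠ 0) :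
    s * ((x + y) / 2 + k / (2 * s) * (x - y)) = ((k + s) * x - (k - s) * y) / 2 := by
  field_simp
  ring

end PellIdentity

theorem a_sq_eq (k : ℝ) (hk : 3 ≤ k) (i : ℕ) (s α β a A : ℝ)
    (hs : s = Real.sqrt (k * (k - 2)))
    (hα : α = k - 1 + s) (hβ : β = k - 1 - s)
    (ha : a = (α ^ (i + 1) + α ^ i + β ^ (i + 1) + β ^ i) / 2)
    (hA : A = (α ^ i + β ^ i) / 2 + (k / (2 * s)) * (α ^ i - β ^ i)) :
    a ^ 2 = k * (k - 2) * A ^ 2 + 2 * k := by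
  have hkk : 0 < k * (k - 2) := by nlinarith
  have hs_pos : 0 < s := hs ▸ Real.sqrt_pos.mpr hkk
  have hs_sq : s ^ 2 = k * (k - 2) := hs ▸ Real.sq_sqrt hkk.le
  have hαβ : α ^ i * β ^ i = 1 := by
    rw [← mul_pow, hα, hβ, mul_eq_one_of_sq_eq hs_sq, one_pow]
  have ha' : a = ((k + s) * α ^ i + (k - s) * β ^ i) / 2 := by
    rw [ha, hα, hβ]
    ring
  have hA' : s * A = ((k + s) * α ^ i - (k - s) * β ^ i) / 2 := by
    rw [hA, mul_half_add_div_mul_sub _ _ hs_pos.ne']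
  rw [ha', ← hs_sq, ← mul_pow, hA']
  exact sq_add_eq_sq_sub_add hs_sq hαβ
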